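/- arXiv:1011.0043 — 4 statements merged into one kernel-verified Lean document; each statement's English description precedes it below -/
import Mathlib

section
/- Let n ≥ 1 and let R ∈ M_n(ℂ) be an upper triangular Toeplitz matrix with entries R_{ij} = z_{j−i} for j ≥ i (and 0 below the diagonal), where z_1 ≠ 0. If A ∈ M_n(ℂ) is any matrix such that ‖f(A)‖ = ‖f(R)‖ for every polynomial f ∈ ℂ[t], then A is unitarily similar to R, i.e., there exists a unitary U ∈ M_n(ℂ) with A = U*RU. -/
open Polynomial Matrix

/-- The operator norm of a complex matrix, i.e. its norm as a linear map on the
Euclidean space `ℂⁿ`; it equals `√(spr(A*A))`, the largest singular value. -/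
noncomputable def opNorm {n : ℕ} (A : Matrix (Fin n) (Fin n) ℂ) : ℝ :=
  ‖Matrix.toEuclideanCLM (𝕜 := ℂ) A‖

/-!
Let `S` be the nilpotent upper shift, so that `R = r(S)` with `r = ∑ zₖ tᵏ`. Since
`r'(0) = z₁ ≠ 0`, `r` has a compositional inverse `q` modulo `tⁿ`; hence `q(R) = S`, the matrix
`B = q(A)` satisfies `‖f(B)‖ = ‖f(S)‖` for all `f`, and `A = r(B)` because `(r ∘ q - t)(R) = 0`.
So `B` is a contraction with `Bⁿ = 0` and `‖Bⁿ⁻¹‖ = 1`. For a unit vector `x` with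
`‖Bⁿ⁻¹x‖ = 1`, all of `x, Bx, …, Bⁿ⁻¹x` are unit vectors, and a contraction `B` that preserves the
norm of `y` satisfies `B*By = y`; therefore `⟪Bⁱx, Bʲx⟫ = ⟪Bⁱ⁺ᵏx, Bʲ⁺ᵏx⟫`, which vanishes for
`i < j` once `j + k = n`. In the orthonormal basis `Bⁿ⁻¹x, …, Bx, x` the matrix of `B` is `S`, so
`B = U*SU` and `A = r(B) = U*r(S)U = U*RU`.
-/

open scoped InnerProductSpace

namespace Polynomial

theorem exists_X_pow_dvd_comp_sub_X {K : Type*} [Field K] {r : K[X]} (hr : r.coeff 1 ≠ 0)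
    (n : ℕ) : ∃ q : K[X], X ^ n ∣ q.comp r - X := by
  obtain ⟨t, ht⟩ : X ∣ r - C (r.coeff 0) := X_dvd_iff.mpr (by simp)
  have ht0 : t.coeff 0 = r.coeff 1 := by
    simpa [coeff_X_mul] using congrArg (coeff · 1) ht.symm
  induction n with
  | zero => exact ⟨0, by simp⟩
  | succ n ih =>
    obtain ⟨q, u, hu⟩ := ih
    set c := u.coeff 0 / r.coeff 1 ^ n
    have hcomp : (q - C c * (X - C (r.coeff 0)) ^ n).comp r - X = X ^ n * (u - C c * t ^ n) := by
      rw [sub_comp, mul_comp, C_comp, pow_comp, sub_comp, X_comp, C_comp, ht]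
      linear_combination hu
    obtain ⟨w, hw⟩ : X ∣ u - C c * t ^ n := X_dvd_iff.mpr <| by
      rw [coeff_sub, coeff_C_mul, coeff_zero_eq_eval_zero (t ^ n), eval_pow,
        ← coeff_zero_eq_eval_zero, ht0, div_mul_cancel₀ _ (pow_ne_zero n hr), sub_self]
    exact ⟨q - C c * (X - C (r.coeff 0)) ^ n, w, by rw [hcomp, hw, pow_succ, mul_assoc]⟩

theorem aeval_eq_aeval_of_X_pow_dvd_sub {R A : Type*} [CommRing R] [Ring A] [Algebra R A]
    {a : A} {n : ℕ} (ha : a ^ n = 0) {p q : R[X]} (h : X ^ n ∣ p - q) :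
    aeval a p = aeval a q := by
  obtain ⟨u, hu⟩ := h
  rw [← sub_eq_zero, ← map_sub, hu, map_mul, map_pow, aeval_X, ha, zero_mul]

theorem aeval_star_mul_mul_of_mem_unitary {R A : Type*} [CommSemiring R] [Semiring A]
    [StarMul A] [Algebra R A] {U : A} (hU : U ∈ unitary A) (a : A) (p : R[X]) :
    aeval (star U * a * U) p = star U * aeval a p * U := by
  simpa using aeval_algHom_apply (Unitary.conjStarAlgAut R A (star ⟨U, hU⟩)) a p

end Polynomial

namespace ContinuousLinearMap

theorem exists_norm_eq_one_and_norm_apply_eq {𝕜 E F : Type*} [RCLike 𝕜] [NormedAddCommGroup E]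
    [NormedSpace 𝕜 E] [ProperSpace E] [Nontrivial E] [NormedAddCommGroup F] [NormedSpace 𝕜 F]
    (f : E →L[𝕜] F) : ∃ x, ‖x‖ = 1 ∧ ‖f x‖ = ‖f‖ := by
  let : NormedSpace ℝ E := NormedSpace.restrictScalars ℝ 𝕜 E
  obtain ⟨x, hx, hfx⟩ := (isCompact_sphere (0 : E) 1).exists_sSup_image_eq
    (NormedSpace.sphere_nonempty.mpr zero_le_one) f.continuous.norm.continuousOn
  exact ⟨x, mem_sphere_zero_iff_norm.mp hx, hfx ▸ f.sSup_sphere_eq_norm⟩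

variable {𝕜 E : Type*} [RCLike 𝕜] [NormedAddCommGroup E] [InnerProductSpace 𝕜 E]
  {T : E →L[𝕜] E}

theorem norm_pow_apply_le (hT : ‖T‖ ≤ 1) (k : ℕ) (x : E) : ‖(T ^ k) x‖ ≤ ‖x‖ := by
  induction k with
  | zero => simp
  | succ k ih =>
    rw [pow_succ', mul_apply_eq_comp]
    calc ‖T ((T ^ k) x)‖ ≤ 1 * ‖(T ^ k) x‖ := T.le_of_opNorm_le hT _
      _ ≤ ‖x‖ := by rwa [one_mul]

theorem exists_norm_eq_one_and_norm_pow_apply_eq_one [ProperSpace E] (hT : ‖T‖ ≤ 1) {m : ℕ}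
    (hm : 1 ≤ ‖T ^ m‖) : ∃ x, ‖x‖ = 1 ∧ ‖(T ^ m) x‖ = 1 := by
  cases subsingleton_or_nontrivial E
  · rw [Subsingleton.elim (T ^ m) 0, norm_zero] at hm
    linarith
  obtain ⟨x, hx, hTx⟩ := (T ^ m).exists_norm_eq_one_and_norm_apply_eq
  exact ⟨x, hx, le_antisymm ((norm_pow_apply_le hT m x).trans hx.le) (hTx ▸ hm)⟩

theorem norm_pow_apply_eq_of_le (hT : ‖T‖ ≤ 1) {x : E} {k m : ℕ} (hkm : k ≤ m)
    (hm : ‖(T ^ m) x‖ = ‖x‖) : ‖(T ^ k) x‖ = ‖x‖ := by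
  refine le_antisymm (norm_pow_apply_le hT k x) ?_
  calc ‖x‖ = ‖(T ^ (m - k)) ((T ^ k) x)‖ := by
        rw [← mul_apply_eq_comp, ← pow_add, Nat.sub_add_cancel hkm, hm]
    _ ≤ ‖(T ^ k) x‖ := norm_pow_apply_le hT _ _

variable [CompleteSpace E]

theorem adjoint_apply_apply_eq_of_norm_apply_eq (hT : ‖T‖ ≤ 1) {y : E} (hy : ‖T y‖ = ‖y‖) :
    adjoint T (T y) = y := by
  have hinner : RCLike.re ⟪adjoint T (T y), y⟫_𝕜 = ‖y‖ ^ 2 := by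
    rw [adjoint_inner_left, inner_self_eq_norm_sq, hy]
  have hle : ‖adjoint T (T y)‖ ≤ ‖y‖ := by
    simpa [hy] using (adjoint T).le_of_opNorm_le ((adjoint.norm_map T).trans_le hT) (T y)
  have hsq := norm_sub_sq (𝕜 := 𝕜) (adjoint T (T y)) y
  rw [← sub_eq_zero, ← norm_eq_zero]
  nlinarith [norm_nonneg (adjoint T (T y) - y), norm_nonneg (adjoint T (T y))]

theorem inner_pow_apply_eq_inner_pow_succ_apply (hT : ‖T‖ ≤ 1) {x : E} {m i : ℕ}
    (hm : ‖(T ^ m) x‖ = ‖x‖) (hi : i + 1 ≤ m) (j : ℕ) :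
    ⟪(T ^ i) x, (T ^ j) x⟫_𝕜 = ⟪(T ^ (i + 1)) x, (T ^ (j + 1)) x⟫_𝕜 := by
  have hTi : ‖T ((T ^ i) x)‖ = ‖(T ^ i) x‖ := by
    rw [← mul_apply_eq_comp, ← pow_succ', norm_pow_apply_eq_of_le hT hi hm,
      norm_pow_apply_eq_of_le hT (by omega) hm]
  rw [← adjoint_apply_apply_eq_of_norm_apply_eq hT hTi, adjoint_inner_left, pow_succ', pow_succ',
    mul_apply_eq_comp, mul_apply_eq_comp]

theorem inner_pow_apply_eq_inner_pow_add_apply (hT : ‖T‖ ≤ 1) {x : E} {m i k : ℕ}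
    (hm : ‖(T ^ m) x‖ = ‖x‖) (hik : i + k ≤ m) (j : ℕ) :
    ⟪(T ^ i) x, (T ^ j) x⟫_𝕜 = ⟪(T ^ (i + k)) x, (T ^ (j + k)) x⟫_𝕜 := by
  induction k with
  | zero => rfl
  | succ k ih =>
    rw [ih (by omega), inner_pow_apply_eq_inner_pow_succ_apply hT hm (by omega)]
    rfl

theorem orthonormal_pow_apply (hT : ‖T‖ ≤ 1) {n : ℕ} {x : E} (hx : ‖x‖ = 1)
    (hxn : (T ^ n) x = 0) (hxm : ‖(T ^ (n - 1)) x‖ = 1) :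
    Orthonormal 𝕜 fun k : Fin n => (T ^ (k : ℕ)) x := by
  have hm : ‖(T ^ (n - 1)) x‖ = ‖x‖ := hxm.trans hx.symm
  have horth (i j : Fin n) (hij : i < j) : ⟪(T ^ (i : ℕ)) x, (T ^ (j : ℕ)) x⟫_𝕜 = 0 := by
    rw [inner_pow_apply_eq_inner_pow_add_apply hT hm (k := n - j) (by omega),
      Nat.add_sub_cancel' j.isLt.le, hxn, inner_zero_right]
  refine ⟨fun k => (norm_pow_apply_eq_of_le hT (by omega) hm).trans hx, fun i j hij => ?_⟩
  rcases lt_or_gt_of_ne hij with h | h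
  · exact horth i j h
  · exact inner_eq_zero_symm.mp (horth j i h)

end ContinuousLinearMap

namespace Matrix

variable (α : Type*) (n : ℕ)

def upperShift [Zero α] [One α] : Matrix (Fin n) (Fin n) α :=
  of fun i j => if (j : ℕ) = i + 1 then 1 else 0

variable {α n}

theorem upperShift_pow_apply [Semiring α] (k : ℕ) (i j : Fin n) :
    (upperShift α n ^ k) i j = if (j : ℕ) = i + k then 1 else 0 := by
  induction k generalizing j with
  | zero => simp [one_apply, Fin.ext_iff, eq_comm]
  | succ k ih =>
    rw [pow_succ, mul_apply, Finset.sum_eq_single_of_mem ⟨j - 1, by omega⟩ (Finset.mem_univ _)]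
    · rw [ih]
      simp only [upperShift, of_apply]
      split_ifs <;> first | (exfalso; omega) | simp
    · intro l _ hl
      have : ¬((l : ℕ) = i + k ∧ (j : ℕ) = l + 1) := fun h => hl (Fin.ext (by simp; omega))
      rw [ih]
      simp only [upperShift, of_apply]
      split_ifs <;> simp_all

theorem upperShift_pow_self [Semiring α] : upperShift α n ^ n = 0 := by
  ext i j
  rw [upperShift_pow_apply, if_neg (by omega), zero_apply]

theorem aeval_upperShift_apply [CommSemiring α] (p : α[X]) (i j : Fin n) :
    aeval (upperShift α n) p i j = if (i : ℕ) ≤ j then p.coeff (j - i) else 0 := by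
  induction p using Polynomial.induction_on' with
  | add p q hp hq => simp only [map_add, add_apply, hp, hq, coeff_add]; split_ifs <;> simp
  | monomial k a =>
    simp only [aeval_monomial, algebraMap_eq_diagonal, diagonal_mul, upperShift_pow_apply,
      coeff_monomial, Pi.algebraMap_apply, Algebra.algebraMap_self, RingHom.id_apply]
    split_ifs <;> first | (exfalso; omega) | simp

theorem conjTranspose_upperShift_mul_self [Semiring α] [StarRing α] :
    (upperShift α n)ᴴ * upperShift α n =
      diagonal fun i : Fin n => if (i : ℕ) = 0 then 0 else 1 := by
  ext i j
  rcases Nat.eq_zero_or_pos i with hi | hi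
  · simp [mul_apply, upperShift, diagonal_apply, hi]
  · rw [mul_apply, Finset.sum_eq_single_of_mem ⟨i - 1, by omega⟩ (Finset.mem_univ _)]
    · simp [upperShift, diagonal_apply, Fin.ext_iff, Nat.sub_add_cancel hi, hi.ne', eq_comm]
    · intro k _ hk
      have : (i : ℕ) ≠ k + 1 := fun h => hk (Fin.ext (by simp; omega))
      simp [upperShift, this]

variable {𝕜 ι : Type*} [RCLike 𝕜] [Fintype ι] [DecidableEq ι]

theorem star_mul_mul_apply_eq_inner (v : ι → EuclideanSpace 𝕜 ι) (M : Matrix ι ι 𝕜) (i j : ι) :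
    (star (of fun i j => v j i) * M * of fun i j => v j i) i j =
      ⟪v i, toEuclideanCLM (𝕜 := 𝕜) M (v j)⟫_𝕜 := by
  simp only [EuclideanSpace.inner_eq_star_dotProduct, ofLp_toEuclideanCLM, mul_apply, star_apply,
    of_apply, dotProduct, mulVec, Finset.sum_mul, Pi.star_apply]
  rw [Finset.sum_comm]
  exact Finset.sum_congr rfl fun k _ => Finset.sum_congr rfl fun l _ => by ring

theorem of_mem_unitaryGroup_of_orthonormal {v : ι → EuclideanSpace 𝕜 ι} (hv : Orthonormal 𝕜 v) :
    (of fun i j => v j i) ∈ unitaryGroup ι 𝕜 := by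
  rw [mem_unitaryGroup_iff']
  ext i j
  have h := star_mul_mul_apply_eq_inner v 1 i j
  rw [mul_one, map_one, one_apply_eq_self] at h
  rw [h, one_apply, orthonormal_iff_ite.mp hv]

open scoped Matrix.Norms.L2Operator

theorem norm_apply_le_l2_opNorm {m : Type*} [Fintype m] (A : Matrix m ι 𝕜) (i : m) (j : ι) :
    ‖A i j‖ ≤ ‖A‖ := by
  have h := l2_opNorm_mulVec A (EuclideanSpace.single j 1)
  simp only [PiLp.ofLp_single, mulVec_single_one, PiLp.norm_single, norm_one, mul_one] at h
  exact (PiLp.norm_apply_le _ i).trans h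

theorem l2_opNorm_upperShift_le_one : ‖upperShift 𝕜 n‖ ≤ 1 := by
  have h := l2_opNorm_conjTranspose_mul_self (upperShift 𝕜 n)
  rw [conjTranspose_upperShift_mul_self, l2_opNorm_diagonal] at h
  have : ‖fun i : Fin n => if (i : ℕ) = 0 then (0 : 𝕜) else 1‖ ≤ 1 :=
    (pi_norm_le_iff_of_nonneg zero_le_one).mpr fun i => by split_ifs <;> simp
  nlinarith [norm_nonneg (upperShift 𝕜 n)]

theorem one_le_l2_opNorm_upperShift_pow_pred (hn : 1 ≤ n) :
    1 ≤ ‖upperShift 𝕜 n ^ (n - 1)‖ := by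
  have h := norm_apply_le_l2_opNorm (upperShift 𝕜 n ^ (n - 1)) ⟨0, hn⟩ ⟨n - 1, by omega⟩
  rwa [upperShift_pow_apply, if_pos (by simp), norm_one] at h

theorem exists_unitary_eq_star_mul_upperShift_mul (B : Matrix (Fin n) (Fin n) 𝕜)
    (hB : ‖B‖ ≤ 1) (hBn : B ^ n = 0) (hB1 : 1 ≤ ‖B ^ (n - 1)‖) :
    ∃ U ∈ unitaryGroup (Fin n) 𝕜, B = star U * upperShift 𝕜 n * U := by
  set T := toEuclideanCLM (𝕜 := 𝕜) B
  have hT : ‖T‖ ≤ 1 := hB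
  have hTpow (k : ℕ) : T ^ k = toEuclideanCLM (𝕜 := 𝕜) (B ^ k) := (map_pow _ _ _).symm
  obtain ⟨x, hx, hxm⟩ :=
    T.exists_norm_eq_one_and_norm_pow_apply_eq_one hT (m := n - 1) (by rwa [hTpow])
  have hxn : (T ^ n) x = 0 := by rw [hTpow, hBn, map_zero, _root_.zero_apply]
  set v : Fin n → EuclideanSpace 𝕜 (Fin n) := fun k => (T ^ (n - 1 - k : ℕ)) x
  have hv : Orthonormal 𝕜 v := by
    have hrev : v = (fun k : Fin n => (T ^ (k : ℕ)) x) ∘ Fin.rev := by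
      funext k
      simp only [v, Function.comp_apply, Fin.val_rev]
      congr 2
      omega
    rw [hrev]
    exact (T.orthonormal_pow_apply hT hx hxn hxm).comp Fin.rev Fin.rev_injective
  have hTv (j : Fin n) : T (v j) = (T ^ (n - j : ℕ)) x := by
    rw [← mul_apply_eq_comp, ← pow_succ']
    congr 2
    omega
  set U := of fun i j => v j i
  have hU : U ∈ unitaryGroup (Fin n) 𝕜 := of_mem_unitaryGroup_of_orthonormal hv
  have hconj : star U * B * U = upperShift 𝕜 n := by
    ext i j
    rw [star_mul_mul_apply_eq_inner, hTv, upperShift, of_apply]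
    by_cases hj : (j : ℕ) = 0
    · rw [hj, Nat.sub_zero, hxn, inner_zero_right, if_neg (by omega)]
    · have hvj : (T ^ (n - j : ℕ)) x = v ⟨j - 1, by omega⟩ := by
        simp only [v]
        congr 2
        omega
      rw [hvj, orthonormal_iff_ite.mp hv]
      simp only [Fin.ext_iff]
      split_ifs <;> first | rfl | (exfalso; omega)
  refine ⟨star U, Unitary.star_mem hU, ?_⟩
  rw [star_star, ← hconj, ← mul_assoc, ← mul_assoc, Unitary.mul_star_self_of_mem hU, one_mul,
    mul_assoc, Unitary.mul_star_self_of_mem hU, mul_one]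

end Matrix

open scoped Matrix.Norms.L2Operator

theorem opNorm_eq_l2_opNorm {n : ℕ} (A : Matrix (Fin n) (Fin n) ℂ) : opNorm A = ‖A‖ := rfl

/-- If `R` is an upper triangular Toeplitz matrix with `z 1 ≠ 0`, and `A` satisfies
`‖f(A)‖ = ‖f(R)‖` for every polynomial `f`, then `A` is unitarily similar to `R`. -/
theorem toeplitz_unitary_similarity
    (n : ℕ) (hn : 1 ≤ n) (z : ℕ → ℂ) (hz : z 1 ≠ 0)
    (R : Matrix (Fin n) (Fin n) ℂ)
    (hR : ∀ i j : Fin n, R i j = if (i : ℕ) ≤ (j : ℕ) then z ((j : ℕ) - (i : ℕ)) else 0)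
    (A : Matrix (Fin n) (Fin n) ℂ)
    (h : ∀ f : Polynomial ℂ, opNorm (aeval A f) = opNorm (aeval R f)) :
    ∃ U : Matrix (Fin n) (Fin n) ℂ, U ∈ Matrix.unitaryGroup (Fin n) ℂ ∧
      A = star U * R * U := by
  simp only [opNorm_eq_l2_opNorm] at h
  obtain ⟨r, hr⟩ : ∃ r : ℂ[X], ∀ m ≤ n, r.coeff m = z m :=
    ⟨∑ k ∈ Finset.range (n + 1), C (z k) * X ^ k, fun m hm => by
      simp [finsetSum_coeff, Nat.lt_succ_of_le hm]⟩
  have hRr : aeval (upperShift ℂ n) r = R := by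
    ext i j
    rw [aeval_upperShift_apply, hR]
    split_ifs
    · exact hr _ (by omega)
    · rfl
  obtain ⟨q, hq⟩ := exists_X_pow_dvd_comp_sub_X (r := r) (hr 1 hn ▸ hz) n
  have hRq : aeval R q = upperShift ℂ n := by
    rw [← hRr, ← aeval_comp, aeval_eq_aeval_of_X_pow_dvd_sub upperShift_pow_self hq, aeval_X]
  set B := aeval A q
  have hB (f : ℂ[X]) : ‖aeval B f‖ = ‖aeval (upperShift ℂ n) f‖ := by
    rw [← aeval_comp, ← hRq, ← aeval_comp, h]
  have hAB : A = aeval B r := by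
    have hR0 : aeval R (r.comp q - X) = 0 := by
      rw [map_sub, aeval_comp, hRq, hRr, aeval_X, sub_self]
    have hA0 : aeval A (r.comp q - X) = 0 := norm_eq_zero.mp (by rw [h, hR0, norm_zero])
    rwa [map_sub, aeval_comp, aeval_X, sub_eq_zero, eq_comm] at hA0
  have hB_norm : ‖B‖ = ‖upperShift ℂ n‖ := by simpa using hB X
  have hB_nilp : B ^ n = 0 := by simpa [upperShift_pow_self] using hB (X ^ n)
  have hB_pred : ‖B ^ (n - 1)‖ = ‖upperShift ℂ n ^ (n - 1)‖ := by simpa using hB (X ^ (n - 1))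
  obtain ⟨U, hU, hBU⟩ := exists_unitary_eq_star_mul_upperShift_mul B
    (hB_norm.trans_le l2_opNorm_upperShift_le_one) hB_nilp
    (hB_pred ▸ one_le_l2_opNorm_upperShift_pow_pred hn)
  exact ⟨U, hU, by rw [hAB, hBU, aeval_star_mul_mul_of_mem_unitary hU, hRr]⟩
end

section
/- Let n ≥ 1 and let A ∈ M_n(ℂ) be a strictly upper triangular matrix whose first superdiagonal entries all equal 1 (A_{i,i+1} = 1 for 1 ≤ i ≤ n−1, A_{ij} = 0 for j ≤ i, and A_{ij} arbitrary for j ≥ i+2). If ‖∑_{k=1}^{n−1} (−1)^{k+1} A^k‖ ≤ 1, then A = Q, where Q ∈ M_n(ℂ) is the strictly upper triangular matrix all of whose entries above the main diagonal equal 1. -/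
/-!
The matrix `B = ∑_{k=1}^{n-1} (-1)^(k+1) A^k` is, like `A`, strictly upper triangular with ones
on the superdiagonal. A column of a matrix has length at most its operator norm, so `‖B‖ ≤ 1`
leaves no room in column `j` besides the `1` in row `j - 1`: `B` is the shift `N`. On the other
hand `1 - B = ∑_{k<n} (-A)^k` is the inverse of `1 + A` because `A` is nilpotent, and
`(1 - N)⁻¹ = 1 + Q`. Hence `1 + A = 1 + Q`.
-/

open Matrix Finset

theorem neg_one_pow_succ_smul_pow {S R : Type*} [CommRing S] [Ring R] [Algebra S R]
    (a : R) (k : ℕ) : (-1 : S) ^ (k + 1) • a ^ k = -(-a) ^ k := by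
  rw [pow_succ, mul_neg_one, neg_smul, Algebra.smul_def, map_pow, map_neg, map_one, neg_pow a]

theorem one_sub_sum_neg_one_pow_smul_pow_mul_one_add {S R : Type*} [CommRing S] [Ring R]
    [Algebra S R] {a : R} {n : ℕ} (ha : a ^ n = 0) :
    (1 - ∑ k ∈ Icc 1 (n - 1), (-1 : S) ^ (k + 1) • a ^ k) * (1 + a) = 1 := by
  obtain _ | n := n
  · exact (subsingleton_of_zero_eq_one (pow_zero a ▸ ha).symm).elim _ _
  have hrange : range (n + 1) = insert 0 (Icc 1 n) := by
    ext k; simp only [mem_range, mem_insert, mem_Icc]; omega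
  have hnil : (-a) ^ (n + 1) = 0 := by rw [neg_pow, ha, mul_zero]
  have hgeom := geom_sum_mul_neg (-a) (n + 1)
  rw [hrange, sum_insert (by simp), hnil, sub_zero, sub_neg_eq_add] at hgeom
  simpa only [Nat.add_sub_cancel, neg_one_pow_succ_smul_pow, sum_neg_distrib, sub_neg_eq_add,
    pow_zero] using hgeom

namespace Matrix

variable {R : Type*} {n : ℕ}

def IsStrictlyUpperTriangular [Zero R] (A : Matrix (Fin n) (Fin n) R) : Prop :=
  ∀ i j : Fin n, (j : ℕ) ≤ i → A i j = 0

section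

variable (R n) [Zero R] [One R]

def superdiagonalOnes : Matrix (Fin n) (Fin n) R :=
  of fun i j => if (i : ℕ) + 1 = j then 1 else 0

def upperOnes : Matrix (Fin n) (Fin n) R :=
  of fun i j => if (i : ℕ) < j then 1 else 0

end

namespace IsStrictlyUpperTriangular

theorem pow_apply_eq_zero [Semiring R] {A : Matrix (Fin n) (Fin n) R}
    (hA : A.IsStrictlyUpperTriangular) (k : ℕ) {i j : Fin n} (hij : (j : ℕ) < i + k) :
    (A ^ k) i j = 0 := by
  induction k generalizing j with
  | zero => exact one_apply_ne (by rintro rfl; omega)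
  | succ k ih =>
    rw [pow_succ, mul_apply]
    refine sum_eq_zero fun t _ => ?_
    rcases lt_or_ge (t : ℕ) (i + k) with ht | ht
    · rw [ih ht, zero_mul]
    · rw [hA t j (by omega), mul_zero]

theorem pow_eq_zero [Semiring R] {A : Matrix (Fin n) (Fin n) R}
    (hA : A.IsStrictlyUpperTriangular) : A ^ n = 0 := by
  ext i j
  exact hA.pow_apply_eq_zero n (by omega)

theorem eq_superdiagonalOnes [NormedRing R] [NormOneClass R]
    {B : Matrix (Fin n) (Fin n) R} (hB : B.IsStrictlyUpperTriangular)
    (hsuper : ∀ i j : Fin n, (i : ℕ) + 1 = j → B i j = 1) (hcol : ∀ j, ∑ i, ‖B i j‖ ^ 2 ≤ 1) :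
    B = superdiagonalOnes R n := by
  ext i j
  rw [superdiagonalOnes, of_apply]
  split_ifs with hij
  · exact hsuper i j hij
  rcases le_or_gt (j : ℕ) i with hji | hij'
  · exact hB i j hji
  -- column `j` already spends its unit of norm on the entry `1` in row `j - 1`
  set i' : Fin n := ⟨j - 1, by omega⟩
  have hi' : i' ≠ i := fun h => by rw [Fin.ext_iff] at h; simp only [i'] at h; omega
  have hpair := add_le_sum (f := fun r => ‖B r j‖ ^ 2) (fun _ _ => by positivity) (mem_univ i')
    (mem_univ i) hi'
  rw [hsuper i' j (by simp only [i']; omega), norm_one, one_pow] at hpair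
  have hsq : ‖B i j‖ ^ 2 = 0 := le_antisymm (by linarith [hcol j]) (by positivity)
  exact norm_eq_zero.mp (pow_eq_zero_iff two_ne_zero |>.mp hsq)

variable {S : Type*} [Semiring S] [Semiring R] [Module S R] {A : Matrix (Fin n) (Fin n) R}

theorem sum_smul_pow {s : Finset ℕ} (hs : 0 ∉ s) (c : ℕ → S)
    (hA : A.IsStrictlyUpperTriangular) : (∑ k ∈ s, c k • A ^ k).IsStrictlyUpperTriangular := by
  intro i j hij
  rw [sum_apply]
  refine sum_eq_zero fun k hk => ?_
  have hk0 : k ≠ 0 := fun h => hs (h ▸ hk)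
  rw [smul_apply, hA.pow_apply_eq_zero k (by omega), smul_zero]

theorem sum_Icc_smul_pow_apply_of_add_one_eq {m : ℕ} (hm : 1 ≤ m) (c : ℕ → S)
    (hA : A.IsStrictlyUpperTriangular) {i j : Fin n} (hij : (i : ℕ) + 1 = j) :
    (∑ k ∈ Icc 1 m, c k • A ^ k) i j = c 1 • A i j := by
  rw [sum_apply, sum_eq_single_of_mem 1 (mem_Icc.mpr ⟨le_rfl, hm⟩), pow_one, smul_apply]
  intro k hk hk1
  rw [smul_apply, hA.pow_apply_eq_zero k (by rw [mem_Icc] at hk; omega), smul_zero]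

end IsStrictlyUpperTriangular

theorem superdiagonalOnes_mul_apply [Semiring R] (M : Matrix (Fin n) (Fin n) R) (i j : Fin n) :
    (superdiagonalOnes R n * M) i j = if h : (i : ℕ) + 1 < n then M ⟨i + 1, h⟩ j else 0 := by
  rw [mul_apply]
  split_ifs with h
  · rw [sum_eq_single ⟨i + 1, h⟩ (fun t _ ht => ?_) (by simp)]
    · simp [superdiagonalOnes]
    · rw [superdiagonalOnes, of_apply, if_neg (fun h' => ht (Fin.ext h'.symm)), zero_mul]
  · refine sum_eq_zero fun t _ => ?_
    rw [superdiagonalOnes, of_apply, if_neg (by omega), zero_mul]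

theorem superdiagonalOnes_mul_upperOnes [Ring R] :
    superdiagonalOnes R n * upperOnes R n = upperOnes R n - superdiagonalOnes R n := by
  ext i j
  rw [superdiagonalOnes_mul_apply, sub_apply]
  simp only [upperOnes, superdiagonalOnes, of_apply]
  split_ifs <;> first | omega | simp

theorem one_sub_superdiagonalOnes_mul_one_add_upperOnes [Ring R] :
    (1 - superdiagonalOnes R n) * (1 + upperOnes R n) = 1 := by
  rw [sub_mul, one_mul, mul_add, mul_one, superdiagonalOnes_mul_upperOnes]
  abel

theorem sum_norm_sq_apply_le_norm_toEuclideanCLM_sq {𝕜 ι : Type*} [RCLike 𝕜] [Fintype ι]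
    [DecidableEq ι] (B : Matrix ι ι 𝕜) (j : ι) :
    ∑ i, ‖B i j‖ ^ 2 ≤ ‖toEuclideanCLM (𝕜 := 𝕜) B‖ ^ 2 := by
  have hcol :
      toEuclideanCLM (𝕜 := 𝕜) B (WithLp.toLp 2 (Pi.single j 1)) = WithLp.toLp 2 (B.col j) := by
    rw [toEuclideanCLM_toLp, mulVec_single, MulOpposite.op_one, one_smul]
  have hle := (toEuclideanCLM (𝕜 := 𝕜) B).le_opNorm (WithLp.toLp 2 (Pi.single j 1))
  rw [hcol, PiLp.toLp_single, PiLp.norm_single, norm_one, mul_one] at hle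
  simpa [EuclideanSpace.norm_sq_eq] using pow_le_pow_left₀ (norm_nonneg _) hle 2

end Matrix

theorem eq_Q_of_norm_alternating_sum_le_one_general
    (n : ℕ)
    (A Q : Matrix (Fin n) (Fin n) ℂ)
    (hstrict : ∀ i j : Fin n, (j : ℕ) ≤ (i : ℕ) → A i j = 0)
    (hsuper : ∀ i j : Fin n, (i : ℕ) + 1 = (j : ℕ) → A i j = 1)
    (hQ : ∀ i j : Fin n, Q i j = if (i : ℕ) < (j : ℕ) then 1 else 0)
    (hnorm : opNorm (∑ k ∈ Finset.Icc 1 (n - 1), ((-1 : ℂ)) ^ (k + 1) • A ^ k) ≤ 1) :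
    A = Q := by
  set B := ∑ k ∈ Finset.Icc 1 (n - 1), ((-1 : ℂ)) ^ (k + 1) • A ^ k
  have hA : A.IsStrictlyUpperTriangular := hstrict
  have hB : B = superdiagonalOnes ℂ n := by
    refine (hA.sum_smul_pow (by simp) _).eq_superdiagonalOnes (fun i j hij => ?_) fun j => ?_
    · rw [hA.sum_Icc_smul_pow_apply_of_add_one_eq (by omega) _ hij, hsuper i j hij]
      norm_num
    · exact (sum_norm_sq_apply_le_norm_toEuclideanCLM_sq B j).trans
        (pow_le_one₀ (norm_nonneg _) hnorm)
  have hQU : Q = upperOnes ℂ n := ext hQ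
  have hA_inv : (1 + A) * (1 - B) = 1 :=
    mul_eq_one_comm.mp (one_sub_sum_neg_one_pow_smul_pow_mul_one_add hA.pow_eq_zero)
  have hQ_inv : (1 - B) * (1 + Q) = 1 := by
    rw [hB, hQU, one_sub_superdiagonalOnes_mul_one_add_upperOnes]
  exact add_left_cancel (left_inv_eq_right_inv hA_inv hQ_inv)

/-- If `A` is strictly upper triangular with all first-superdiagonal entries equal to `1`,
and `‖∑_{k=1}^{n-1} (-1)^(k+1) A^k‖ ≤ 1`, then `A = Q`, where `Q` is the strictly upper
triangular matrix all of whose entries above the diagonal equal `1`. -/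
theorem eq_Q_of_norm_alternating_sum_le_one
    (n : ℕ) (hn : 1 ≤ n)
    (A Q : Matrix (Fin n) (Fin n) ℂ)
    (hstrict : ∀ i j : Fin n, (j : ℕ) ≤ (i : ℕ) → A i j = 0)
    (hsuper : ∀ i j : Fin n, (i : ℕ) + 1 = (j : ℕ) → A i j = 1)
    (hQ : ∀ i j : Fin n, Q i j = if (i : ℕ) < (j : ℕ) then 1 else 0)
    (hnorm : opNorm (∑ k ∈ Finset.Icc 1 (n - 1), ((-1 : ℂ)) ^ (k + 1) • A ^ k) ≤ 1) :
    A = Q :=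
  eq_Q_of_norm_alternating_sum_le_one_general n A Q hstrict hsuper hQ hnorm
end

section
/- Let 0 < α < β be real numbers and let A, A' ∈ M_3(ℂ) be the matrices A = [[0, α, 0], [0, 0, β], [0, 0, 0]] and A' = [[0, β, 0], [0, 0, α], [0, 0, 0]]. Then ‖f(A')‖ = ‖f(A)‖ for every polynomial f ∈ ℂ[t], yet A' is not unitarily similar to A. -/
/-!
The reversal permutation `P` of the basis of `ℂ³` conjugates `Aᵀ` into `A'`. Since `f(Aᵀ) = f(A)ᵀ`,
and both transposition and conjugation by a unitary preserve the operator norm, `‖f(A')‖ = ‖f(A)‖`.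

Unitary similarity preserves the trace of every word in `X` and `X*`. For the word
`X* X X* X X X*` the trace is `α⁴β²` at `A` but `β⁴α²` at `A'`, and these differ when `0 < α < β`.
-/

open Polynomial Matrix

open scoped Matrix.Norms.L2Operator

namespace Matrix

section L2OpNorm

variable {𝕜 : Type*} [RCLike 𝕜] {m n : Type*}

lemma norm_toLp_star [Fintype n] (v : n → 𝕜) :
    ‖WithLp.toLp 2 (star v)‖ = ‖WithLp.toLp 2 v‖ := by
  simp [EuclideanSpace.norm_eq]

lemma map_star_mulVec [Fintype n] (M : Matrix m n 𝕜) (v : n → 𝕜) :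
    M.map star *ᵥ v = star (M *ᵥ star v) := by
  ext i
  simp [mulVec, dotProduct, mul_comm]

variable [Fintype m] [Fintype n] [DecidableEq n]

lemma l2_opNorm_map_star_le (M : Matrix m n 𝕜) : ‖M.map star‖ ≤ ‖M‖ := by
  rw [l2_opNorm_def]
  refine ContinuousLinearMap.opNorm_le_bound _ (norm_nonneg _) fun x => ?_
  calc ‖WithLp.toLp 2 (M.map star *ᵥ WithLp.ofLp x)‖
      = ‖WithLp.toLp 2 (M *ᵥ star (WithLp.ofLp x))‖ := by
        rw [map_star_mulVec, norm_toLp_star]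
    _ ≤ ‖M‖ * ‖WithLp.toLp 2 (star (WithLp.ofLp x))‖ := l2_opNorm_mulVec M _
    _ = ‖M‖ * ‖x‖ := by rw [norm_toLp_star]

lemma l2_opNorm_map_star (M : Matrix m n 𝕜) : ‖M.map star‖ = ‖M‖ := by
  refine le_antisymm (l2_opNorm_map_star_le M) ?_
  simpa [map_map, Function.comp_def] using l2_opNorm_map_star_le (M.map star)

lemma l2_opNorm_transpose [DecidableEq m] (M : Matrix m n 𝕜) : ‖Mᵀ‖ = ‖M‖ := by
  rw [← l2_opNorm_map_star M, ← l2_opNorm_conjTranspose]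
  rfl

end L2OpNorm

lemma aeval_transpose {R m : Type*} [CommSemiring R] [Fintype m] [DecidableEq m]
    (M : Matrix m m R) (p : R[X]) : aeval Mᵀ p = (aeval M p)ᵀ := by
  have h := aeval_algHom_apply (transposeAlgEquiv m R R) M p
  simp only [transposeAlgEquiv_apply, aeval_op_apply] at h
  exact MulOpposite.op_injective h

section UnitaryConj

variable {R m : Type*} [CommRing R] [StarRing R] [Fintype m] [DecidableEq m]
  {U : Matrix m m R}

lemma star_mul_mul_eq_conjStarAlgAut (hU : U ∈ unitaryGroup m R) (M : Matrix m m R) :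
    star U * M * U = Unitary.conjStarAlgAut R _ (star ⟨U, hU⟩) M :=
  (Unitary.conjStarAlgAut_star_apply ⟨U, hU⟩ M).symm

lemma aeval_star_mul_mul (hU : U ∈ unitaryGroup m R) (M : Matrix m m R) (p : R[X]) :
    aeval (star U * M * U) p = star U * aeval M p * U := by
  simp only [star_mul_mul_eq_conjStarAlgAut hU, aeval_algHom_apply]

lemma trace_star_mul_mul (hU : U ∈ unitaryGroup m R) (M : Matrix m m R) :
    trace (star U * M * U) = trace M := by
  rw [trace_mul_cycle, mem_unitaryGroup_iff.mp hU, one_mul]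

end UnitaryConj

lemma star_fin_three {R : Type*} [Star R] (a b c d e f g h i : R) :
    star !![a, b, c; d, e, f; g, h, i] =
      !![star a, star d, star g; star b, star e, star h; star c, star f, star i] := by
  rw [star_eq_conjTranspose, eta_fin_three (_ᴴ)]
  simp

lemma transpose_fin_three {R : Type*} (a b c d e f g h i : R) :
    !![a, b, c; d, e, f; g, h, i]ᵀ = !![a, d, g; b, e, h; c, f, i] := by
  rw [eta_fin_three (_ᵀ)]
  simp

end Matrix

def starWord {R : Type*} [Mul R] [Star R] (X : R) : R :=
  star X * X * star X * X * X * star X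

lemma trace_starWord_star_mul_mul {R m : Type*} [CommRing R] [StarRing R] [Fintype m]
    [DecidableEq m] {U : Matrix m m R} (hU : U ∈ unitaryGroup m R) (M : Matrix m m R) :
    trace (starWord (star U * M * U)) = trace (starWord M) := by
  simp only [starWord, star_mul_mul_eq_conjStarAlgAut hU, ← map_star, ← map_mul]
  rw [← star_mul_mul_eq_conjStarAlgAut hU, trace_star_mul_mul hU]

lemma opNorm_star_mul_mul {n : ℕ} {U : Matrix (Fin n) (Fin n) ℂ}
    (hU : U ∈ unitaryGroup (Fin n) ℂ) (M : Matrix (Fin n) (Fin n) ℂ) :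
    opNorm (star U * M * U) = opNorm M := by
  change ‖star U * M * U‖ = ‖M‖
  rw [mul_assoc, CStarRing.norm_mem_unitary_mul _ (Unitary.star_mem hU),
    CStarRing.norm_mul_mem_unitary M hU]

lemma opNorm_aeval_star_mul_transpose_mul {n : ℕ} {U : Matrix (Fin n) (Fin n) ℂ}
    (hU : U ∈ unitaryGroup (Fin n) ℂ) (M : Matrix (Fin n) (Fin n) ℂ) (p : ℂ[X]) :
    opNorm (aeval (star U * Mᵀ * U) p) = opNorm (aeval M p) := by
  rw [aeval_star_mul_mul hU, opNorm_star_mul_mul hU, aeval_transpose]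
  exact l2_opNorm_transpose _

lemma antidiagonal_mem_unitaryGroup :
    !![0, 0, 1; 0, 1, 0; 1, 0, 0] ∈ unitaryGroup (Fin 3) ℂ := by
  rw [mem_unitaryGroup_iff, star_fin_three]
  simp [one_fin_three]

lemma weights_swap_eq_star_mul_transpose_mul (a b : ℂ) :
    !![0, b, 0; 0, 0, a; 0, 0, 0] =
      star !![0, 0, 1; 0, 1, 0; 1, 0, 0] * (!![0, a, 0; 0, 0, b; 0, 0, 0])ᵀ *
        !![(0 : ℂ), 0, 1; 0, 1, 0; 1, 0, 0] := by
  simp [star_fin_three, transpose_fin_three]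

lemma opNorm_aeval_weights_swap (a b : ℂ) (p : ℂ[X]) :
    opNorm (aeval !![0, b, 0; 0, 0, a; 0, 0, 0] p) =
      opNorm (aeval !![0, a, 0; 0, 0, b; 0, 0, 0] p) := by
  rw [weights_swap_eq_star_mul_transpose_mul,
    opNorm_aeval_star_mul_transpose_mul antidiagonal_mem_unitaryGroup]

lemma trace_starWord_weights (a b : ℝ) :
    trace (starWord !![0, (a : ℂ), 0; 0, 0, (b : ℂ); 0, 0, 0]) = ((a ^ 4 * b ^ 2 : ℝ) : ℂ) := by
  simp [starWord, star_fin_three, trace_fin_three, pow_succ, mul_assoc]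

/-- For `0 < α < β`, the matrices `A = [[0,α,0],[0,0,β],[0,0,0]]` and
`A' = [[0,β,0],[0,0,α],[0,0,0]]` satisfy `‖f(A')‖ = ‖f(A)‖` for every polynomial `f`,
yet `A'` is not unitarily similar to `A`. -/
theorem norm_equal_not_unitarily_similar
    (α β : ℝ) (hα : 0 < α) (hαβ : α < β)
    (A A' : Matrix (Fin 3) (Fin 3) ℂ)
    (hA : A = !![0, (α : ℂ), 0; 0, 0, (β : ℂ); 0, 0, 0])
    (hA' : A' = !![0, (β : ℂ), 0; 0, 0, (α : ℂ); 0, 0, 0]) :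
    (∀ f : Polynomial ℂ, opNorm (aeval A' f) = opNorm (aeval A f)) ∧
    ¬ ∃ U : Matrix (Fin 3) (Fin 3) ℂ, U ∈ Matrix.unitaryGroup (Fin 3) ℂ ∧
        A' = star U * A * U := by
  subst hA hA'
  refine ⟨opNorm_aeval_weights_swap _ _, ?_⟩
  rintro ⟨U, hU, hconj⟩
  have htrace := trace_starWord_star_mul_mul hU !![0, (α : ℂ), 0; 0, 0, (β : ℂ); 0, 0, 0]
  rw [← hconj, trace_starWord_weights, trace_starWord_weights] at htrace
  have heq : β ^ 4 * α ^ 2 = α ^ 4 * β ^ 2 := by exact_mod_cast htrace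
  have hβ : 0 < β := hα.trans hαβ
  have hpos : 0 < α ^ 2 * β ^ 2 * (β ^ 2 - α ^ 2) :=
    mul_pos (by positivity) (sub_pos.mpr (pow_lt_pow_left₀ hαβ hα.le two_ne_zero))
  linarith
end

section
/- Let R ∈ M_n(ℂ) be an upper triangular Toeplitz matrix with entries R_{ij} = z_{j−i} for j ≥ i, where z_1 ≠ 0. Then R − z_0 I is similar to the nilpotent Jordan block S ∈ M_n(ℂ): there exists an invertible X ∈ M_n(ℂ) with S = X(R − z_0 I)X⁻¹. -/
open Matrix

/-!
`N := R - z₀ I` is strictly upper triangular with the constant value `z₁` on the superdiagonal,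
so `(Nᵏ)ᵢⱼ` vanishes for `j < i + k` and equals `z₁ᵏ` for `j = i + k`; in particular `Nⁿ = 0`.
The matrix `X` whose `i`-th row is `e₀ᵀ Nⁱ` is therefore upper triangular with diagonal
`1, z₁, …, z₁ⁿ⁻¹`, hence invertible, and `S X = X N` because left multiplication by `S` shifts
the rows up by one.
-/

namespace Matrix

variable {K : Type*} [CommRing K] {n : ℕ}

theorem shift_mul_apply {S : Matrix (Fin n) (Fin n) K}
    (hS : ∀ i j : Fin n, S i j = if (i : ℕ) + 1 = (j : ℕ) then 1 else 0)
    (M : Matrix (Fin n) (Fin n) K) (i j : Fin n) :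
    (S * M) i j = if h : (i : ℕ) + 1 < n then M ⟨i + 1, h⟩ j else 0 := by
  rw [mul_apply]
  split_ifs with h
  · rw [Finset.sum_eq_single ⟨i + 1, h⟩, hS, if_pos rfl, one_mul]
    · intro l _ hl
      rw [hS, if_neg (fun h' => hl (Fin.ext h'.symm)), zero_mul]
    · simp
  · refine Finset.sum_eq_zero fun l _ => ?_
    rw [hS, if_neg (by omega), zero_mul]

section StrictlyUpperTriangular

variable {N : Matrix (Fin n) (Fin n) K} {a : K}

theorem pow_apply_eq_zero_of_lt_add (hN : ∀ i j : Fin n, (j : ℕ) ≤ i → N i j = 0) :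
    ∀ (k : ℕ) (i j : Fin n), (j : ℕ) < i + k → (N ^ k) i j = 0 := by
  intro k
  induction k with
  | zero =>
    intro i j hij
    rw [pow_zero, one_apply_ne (fun h => by simp [h] at hij)]
  | succ k ih =>
    intro i j hij
    rw [pow_succ, mul_apply]
    refine Finset.sum_eq_zero fun l _ => ?_
    rcases lt_or_ge (l : ℕ) (i + k) with hl | hl
    · rw [ih i l hl, zero_mul]
    · rw [hN l j (by omega), mul_zero]

theorem pow_apply_of_add_eq (hN : ∀ i j : Fin n, (j : ℕ) ≤ i → N i j = 0)
    (hsup : ∀ i j : Fin n, (i : ℕ) + 1 = j → N i j = a) :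
    ∀ (k : ℕ) (i j : Fin n), (i : ℕ) + k = j → (N ^ k) i j = a ^ k := by
  intro k
  induction k with
  | zero =>
    intro i j hij
    rw [Fin.ext hij, pow_zero, pow_zero, one_apply_eq]
  | succ k ih =>
    intro i j hij
    let m : Fin n := ⟨i + k, by omega⟩
    rw [pow_succ, mul_apply, Finset.sum_eq_single m, ih i m rfl, hsup m j (by simp [m]; omega),
      pow_succ]
    · intro l _ hlm
      rcases lt_or_gt_of_ne (Fin.val_ne_of_ne hlm) with hl | hl
      · rw [pow_apply_eq_zero_of_lt_add hN k i l hl, zero_mul]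
      · rw [hN l j (by simp [m] at hl; omega), mul_zero]
    · simp

variable [NeZero n]

def krylovRows (N : Matrix (Fin n) (Fin n) K) : Matrix (Fin n) (Fin n) K :=
  fun i j => (N ^ (i : ℕ)) 0 j

theorem krylovRows_isUpperTriangular (hN : ∀ i j : Fin n, (j : ℕ) ≤ i → N i j = 0) :
    (krylovRows N).IsUpperTriangular :=
  fun i j hij => pow_apply_eq_zero_of_lt_add hN i 0 j (by simpa using hij)

theorem isUnit_krylovRows (hN : ∀ i j : Fin n, (j : ℕ) ≤ i → N i j = 0)
    (hsup : ∀ i j : Fin n, (i : ℕ) + 1 = j → N i j = a) (ha : IsUnit a) :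
    IsUnit (krylovRows N) := by
  rw [isUnit_iff_isUnit_det, det_of_isUpperTriangular (krylovRows_isUpperTriangular hN),
    IsUnit.prod_univ_iff]
  intro i
  rw [krylovRows, pow_apply_of_add_eq hN hsup i 0 i (by simp)]
  exact ha.pow _

theorem shift_mul_krylovRows (hN : ∀ i j : Fin n, (j : ℕ) ≤ i → N i j = 0)
    {S : Matrix (Fin n) (Fin n) K}
    (hS : ∀ i j : Fin n, S i j = if (i : ℕ) + 1 = (j : ℕ) then 1 else 0) :
    S * krylovRows N = krylovRows N * N := by
  ext i j
  have hrhs : (krylovRows N * N) i j = (N ^ ((i : ℕ) + 1)) 0 j := by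
    rw [pow_succ, mul_apply, mul_apply]
    rfl
  rw [hrhs, shift_mul_apply hS]
  split_ifs with h
  · rfl
  · exact (pow_apply_eq_zero_of_lt_add hN _ 0 j (by simp; omega)).symm

theorem exists_isUnit_shift_eq_conj (hN : ∀ i j : Fin n, (j : ℕ) ≤ i → N i j = 0)
    (hsup : ∀ i j : Fin n, (i : ℕ) + 1 = j → N i j = a) (ha : IsUnit a)
    {S : Matrix (Fin n) (Fin n) K}
    (hS : ∀ i j : Fin n, S i j = if (i : ℕ) + 1 = (j : ℕ) then 1 else 0) :
    ∃ X : Matrix (Fin n) (Fin n) K, IsUnit X ∧ S = X * N * X⁻¹ := by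
  have hX := isUnit_krylovRows hN hsup ha
  refine ⟨krylovRows N, hX, ?_⟩
  rw [← shift_mul_krylovRows hN hS,
    mul_nonsing_inv_cancel_right _ _ ((isUnit_iff_isUnit_det _).1 hX)]

end StrictlyUpperTriangular

end Matrix

/-- If `R` is an upper triangular Toeplitz matrix with `z 1 ≠ 0`, then `R - z₀ I` is
similar to the nilpotent Jordan block `S`. -/
theorem toeplitz_sub_scalar_similar_jordan_block
    (n : ℕ) (hn : 1 ≤ n) (z : ℕ → ℂ) (hz : z 1 ≠ 0)
    (R : Matrix (Fin n) (Fin n) ℂ)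
    (hR : ∀ i j : Fin n, R i j = if (i : ℕ) ≤ (j : ℕ) then z ((j : ℕ) - (i : ℕ)) else 0)
    (S : Matrix (Fin n) (Fin n) ℂ)
    (hS : ∀ i j : Fin n, S i j = if (i : ℕ) + 1 = (j : ℕ) then 1 else 0) :
    ∃ X : Matrix (Fin n) (Fin n) ℂ, IsUnit X ∧
      S = X * (R - z 0 • (1 : Matrix (Fin n) (Fin n) ℂ)) * X⁻¹ := by
  have : NeZero n := ⟨by omega⟩
  have hN : ∀ i j : Fin n, (j : ℕ) ≤ i → (R - z 0 • 1) i j = 0 := by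
    intro i j hji
    rcases hji.lt_or_eq with hlt | heq
    · simp [hR, one_apply_ne (Fin.ne_of_gt hlt), not_le.2 hlt]
    · simp [hR, Fin.ext heq]
  have hsup : ∀ i j : Fin n, (i : ℕ) + 1 = j → (R - z 0 • 1) i j = z 1 := by
    intro i j hij
    simp [hR, Fin.ext_iff, ← hij]
  exact exists_isUnit_shift_eq_conj hN hsup hz.isUnit hS
end
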